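/- Let G be a graph with n vertices, λ an eigenvalue of G of multiplicity k > 0, and X ⊂ V(G). Then X is a λ-star set of G if and only if ℝ^n decomposes as the direct sum of the eigenspace E_G(λ) and the coordinate subspace spanned by the standard basis vectors e_i with i ∉ X. -/

import Mathlib

open Matrix

noncomputable def eigSpace {m : Type*} [Fintype m] [DecidableEq m]
    (A : Matrix m m ℝ) (lam : ℝ) : Submodule ℝ (m → ℝ) :=
  LinearMap.ker (Matrix.mulVecLin (A - lam • (1 : Matrix m m ℝ)))

/-- `lam` is an eigenvalue of the real matrix `A`. -/
def IsEig {m : Type*} [Fintype m] [DecidableEq m] (A : Matrix m m ℝ) (lam : ℝ) : Prop :=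
  eigSpace A lam ≠ ⊥

/-- The multiplicity of `lam` as an eigenvalue of `A`. -/
noncomputable def multE {m : Type*} [Fintype m] [DecidableEq m]
    (A : Matrix m m ℝ) (lam : ℝ) : ℕ :=
  Module.finrank ℝ (eigSpace A lam)

/-- `lam` is a main eigenvalue of `A`: its eigenspace is not orthogonal to the all-ones
vector. -/
def IsMainEig {m : Type*} [Fintype m] [DecidableEq m] (A : Matrix m m ℝ) (lam : ℝ) : Prop :=
  ∃ x ∈ eigSpace A lam, ∑ i, x i ≠ 0

/-- The adjacency matrix of the subgraph of `G` induced by the vertex set `S`. -/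
def indMatrix {n : ℕ} (G : SimpleGraph (Fin n)) [DecidableRel G.Adj] (S : Finset (Fin n)) :
    Matrix S S ℝ :=
  (G.adjMatrix ℝ).submatrix (fun i => (i : Fin n)) (fun j => (j : Fin n))

/-- `X` is a `lam`-star set of `G`: its cardinality equals the multiplicity of `lam`
and `lam` is not an eigenvalue of the subgraph induced by the complement of `X`. -/
def IsStarSet {n : ℕ} (G : SimpleGraph (Fin n)) [DecidableRel G.Adj] (lam : ℝ)
    (X : Finset (Fin n)) : Prop :=
  X.card = multE (G.adjMatrix ℝ) lam ∧ ¬ IsEig (indMatrix G Xᶜ) lam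

/-- The block `N` of the adjacency matrix: rows indexed by `Xᶜ`, columns by `X`. -/
def Nmat {n : ℕ} (G : SimpleGraph (Fin n)) [DecidableRel G.Adj] (X : Finset (Fin n)) :
    Matrix ↥(Xᶜ) ↥X ℝ :=
  (G.adjMatrix ℝ).submatrix (fun i => (i : Fin n)) (fun j => (j : Fin n))

/-- The block `C` of the adjacency matrix: the adjacency matrix of `G - X`. -/
def Cmat {n : ℕ} (G : SimpleGraph (Fin n)) [DecidableRel G.Adj] (X : Finset (Fin n)) :
    Matrix ↥(Xᶜ) ↥(Xᶜ) ℝ :=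
  indMatrix G Xᶜ


/-!
Write `M = A - λ • 1` and `W` for the coordinate subspace on `Xᶜ`. A vector of `W` is killed by
`M` only if its restriction to `Xᶜ` is killed by the principal block `M[Xᶜ, Xᶜ]`, so when `λ` is
not an eigenvalue of `G - X` the spaces `E(λ)` and `W` meet trivially, and `|X| = dim E(λ)` is
then exactly the dimension count for `E(λ) ⊕ W = ℝⁿ`. Conversely, if `y` is in the kernel of the
block and `x` is its extension by zero, then `M x` is supported on `X`, hence orthogonal to `W`,
and it is orthogonal to `E(λ) = ker M` because `M` is symmetric. Since `E(λ) + W = ℝⁿ`, this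
forces `M x = 0`, so `x ∈ E(λ) ∩ W = 0`.
-/

open Submodule Set

section
variable {m : Type*} [Fintype m]

theorem mem_span_range_single_iff [DecidableEq m] {S : Finset m} {x : m → ℝ} :
    x ∈ span ℝ (range fun i : S => Pi.single (i : m) (1 : ℝ)) ↔ ∀ j ∉ S, x j = 0 := by
  have hrange : (range fun i : S => Pi.single (i : m) (1 : ℝ)) = Pi.basisFun ℝ m '' ↑S := by
    ext; simp
  rw [hrange, Module.Basis.mem_span_image]
  simp [Set.subset_def, not_imp_comm]

theorem finrank_span_range_single [DecidableEq m] (S : Finset m) :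
    Module.finrank ℝ (span ℝ (range fun i : S => (Pi.single (i : m) (1 : ℝ) : m → ℝ))) =
      S.card := by
  rw [finrank_span_eq_card]
  · simp
  · convert (Pi.basisFun ℝ m).linearIndependent.comp _ Subtype.val_injective
    simp

theorem mulVec_apply_eq_submatrix_mulVec {R : Type*} [NonUnitalNonAssocSemiring R]
    (M : Matrix m m R) {S : Finset m} {x : m → R} (hx : ∀ j ∉ S, x j = 0) (i : S) :
    (M *ᵥ x) i = (M.submatrix (↑) (↑) *ᵥ fun j : S => x j) i := by
  simp only [mulVec, dotProduct, submatrix_apply]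
  rw [Finset.sum_coe_sort S fun j => M i j * x j]
  exact (Finset.sum_subset (Finset.subset_univ S) fun j _ hj => by simp [hx j hj]).symm

theorem submatrix_sub_smul_one {R l n : Type*} [Ring R] [DecidableEq l] [DecidableEq n]
    (A : Matrix n n R) (r : R) {e : l → n} (he : e.Injective) :
    (A - r • 1).submatrix e e = A.submatrix e e - r • 1 := by
  rw [← submatrix_one (α := R) e he]
  rfl

theorem dotProduct_mulVec_eq_zero_of_mulVec_eq_zero {R : Type*} [CommSemiring R]
    {M : Matrix m m R} (hM : M.IsSymm) (x : m → R) {e : m → R} (he : M *ᵥ e = 0) :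
    (M *ᵥ x) ⬝ᵥ e = 0 := by
  rw [← hM.eq, mulVec_transpose, ← dotProduct_mulVec, he, dotProduct_zero]

variable [DecidableEq m]

theorem mem_eigSpace_iff {A : Matrix m m ℝ} {lam : ℝ} {x : m → ℝ} :
    x ∈ eigSpace A lam ↔ (A - lam • 1) *ᵥ x = 0 :=
  LinearMap.mem_ker

theorem disjoint_eigSpace_span_range_single {A : Matrix m m ℝ} {lam : ℝ} {S : Finset m}
    (h : eigSpace (A.submatrix (fun i : S => (i : m)) (fun i : S => (i : m))) lam = ⊥) :
    Disjoint (eigSpace A lam) (span ℝ (range fun i : S => Pi.single (i : m) (1 : ℝ))) := by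
  rw [disjoint_def]
  intro x hxE hxS
  rw [mem_span_range_single_iff] at hxS
  have hrestrict : (fun j : S => x j) = 0 := by
    rw [← mem_bot ℝ, ← h, mem_eigSpace_iff,
      ← submatrix_sub_smul_one _ _ Subtype.val_injective]
    funext i
    rw [← mulVec_apply_eq_submatrix_mulVec _ hxS, mem_eigSpace_iff.mp hxE]
    rfl
  funext j
  by_cases hj : j ∈ S
  · exact congrFun hrestrict ⟨j, hj⟩
  · exact hxS j hj

theorem eigSpace_submatrix_eq_bot {A : Matrix m m ℝ} (hA : A.IsSymm) {lam : ℝ} {S : Finset m}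
    (h : IsCompl (eigSpace A lam) (span ℝ (range fun i : S => Pi.single (i : m) (1 : ℝ)))) :
    eigSpace (A.submatrix (fun i : S => (i : m)) (fun i : S => (i : m))) lam = ⊥ := by
  rw [eq_bot_iff]
  intro y hy
  set x : m → ℝ := fun i => if h : i ∈ S then y ⟨i, h⟩ else 0
  have hxS : ∀ j ∉ S, x j = 0 := fun j hj => dif_neg hj
  have hxy : (fun j : S => x j) = y := funext fun j => dif_pos j.2
  set v := (A - lam • 1) *ᵥ x
  have hvS : ∀ i ∈ S, v i = 0 := by
    intro i hi
    show ((A - lam • 1) *ᵥ x) ((⟨i, hi⟩ : S) : m) = 0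
    rw [mulVec_apply_eq_submatrix_mulVec _ hxS,
      submatrix_sub_smul_one _ _ Subtype.val_injective, hxy, mem_eigSpace_iff.mp hy]
    rfl
  have hv : ∀ z, v ⬝ᵥ z = 0 := by
    intro z
    obtain ⟨e, he, w, hw, rfl⟩ := mem_sup.mp (h.codisjoint.eq_top ▸ mem_top : z ∈ _ ⊔ _)
    rw [dotProduct_add, dotProduct_mulVec_eq_zero_of_mulVec_eq_zero
      (hA.sub (isSymm_one.smul lam)) x he, zero_add]
    rw [mem_span_range_single_iff] at hw
    refine Finset.sum_eq_zero fun i _ => ?_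
    by_cases hi : i ∈ S
    · simp [hvS i hi]
    · simp [hw i hi]
  have hxE : x ∈ eigSpace A lam := dotProduct_self_eq_zero.mp (hv v)
  have hx : x = 0 := disjoint_def.mp h.disjoint x hxE (mem_span_range_single_iff.mpr hxS)
  rw [← hxy, hx]
  rfl

end

theorem stmt1_general {n : ℕ} (G : SimpleGraph (Fin n)) [DecidableRel G.Adj] (lam : ℝ)
    (X : Finset (Fin n)) :
    IsStarSet G lam X ↔
      IsCompl (eigSpace (G.adjMatrix ℝ) lam)
        (Submodule.span ℝ (Set.range fun i : ↥(Xᶜ) => Pi.single (i : Fin n) (1 : ℝ))) := by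
  have hW : Module.finrank ℝ (span ℝ (range fun i : ↥(Xᶜ) =>
      (Pi.single (i : Fin n) (1 : ℝ) : Fin n → ℝ))) = n - X.card := by
    rw [finrank_span_range_single, Finset.card_compl, Fintype.card_fin]
  have hX : X.card ≤ n := by simpa using X.card_le_univ
  constructor
  · rintro ⟨hcard, hC⟩
    refine (isCompl_iff_disjoint _ _ ?_).mpr
      (disjoint_eigSpace_span_range_single (not_not.mp hC))
    rw [Module.finrank_fin_fun, hW, ← multE, ← hcard]
    omega
  · intro h
    have hsum := finrank_add_eq_of_isCompl h
    rw [Module.finrank_fin_fun, hW] at hsum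
    exact ⟨by unfold multE; omega, not_not.mpr (eigSpace_submatrix_eq_bot G.isSymm_adjMatrix h)⟩

theorem stmt1 {n : ℕ} (G : SimpleGraph (Fin n)) [DecidableRel G.Adj] (lam : ℝ)
    (k : ℕ) (hk : k = multE (G.adjMatrix ℝ) lam) (hk0 : 0 < k)
    (X : Finset (Fin n)) (hX : X ⊂ Finset.univ) :
    IsStarSet G lam X ↔
      IsCompl (eigSpace (G.adjMatrix ℝ) lam)
        (Submodule.span ℝ (Set.range fun i : ↥(Xᶜ) => Pi.single (i : Fin n) (1 : ℝ))) :=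
  stmt1_general G lam X
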